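/- Let q > 1 be real, m ≥ 0 and k ≥ 1 integers, and r_1,…,r_k integers with 0 ≤ r_i ≤ m. Define the polynomial 𝒫(x) := x^{−1} ∏_{i=1}^{k} ( x · (x;q^{−1})_{m−r_i}/(q;q)_{m−r_i} ) (a polynomial in x since k ≥ 1). Then Δ_q^{m}(𝒫)(1) = q^{−binom(m,2) + m(k−1)} (q−1)^{−m} · M^{m}_{r_1,…,r_k}(q). -/

import Mathlib

/-- The `q`-difference operator `Δ_q(f)(x) = (f(qx) − f(x)) / ((q−1) x)`. -/
noncomputable def qDiffOp (q : ℝ) (f : ℝ → ℝ) : ℝ → ℝ :=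
  fun x => (f (q * x) - f x) / ((q - 1) * x)

/-- The `q`-Pochhammer symbol `(a; q)_m = ∏_{i=0}^{m-1} (1 - a q^i)` over `ℝ`. -/
noncomputable def qPoch (a q : ℝ) (m : ℕ) : ℝ := ∏ i ∈ Finset.range m, (1 - a * q ^ i)

/-- The `q`-integer `[m]_q = 1 + q + ⋯ + q^{m-1}`. -/
noncomputable def qInt (q : ℝ) (m : ℕ) : ℝ := ∑ i ∈ Finset.range m, q ^ i

/-- The `q`-factorial `[m]!_q = [1]_q [2]_q ⋯ [m]_q`. -/
noncomputable def qFact (q : ℝ) (m : ℕ) : ℝ := ∏ i ∈ Finset.range m, qInt q (i + 1)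

/-- The `q`-binomial coefficient `[n choose k]_q = [n]!_q / ([k]!_q [n-k]!_q)`. -/
noncomputable def qBinom (q : ℝ) (n k : ℕ) : ℝ := qFact q n / (qFact q k * qFact q (n - k))

/-- `M^m_{r_1,…,r_j}(q) = Σ_{d=0}^{min_i r_i} (−1)^d q^{binom(d+1,2) − jd} [m choose d]_q
∏_i [m−d choose r_i−d]_q` for a nonempty list `r` of length `j`, and `M^m_∅(q) = 0`. -/
noncomputable def MqL (q : ℝ) (m : ℕ) : List ℕ → ℝ
  | [] => 0
  | (a :: as) =>
    ∑ d ∈ Finset.range ((as.foldr min a) + 1),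
      (-1 : ℝ) ^ d * q ^ ((d * (d + 1) / 2 : ℤ) - ((a :: as).length : ℤ) * d) *
        qBinom q m d * ((a :: as).map (fun ri => qBinom q (m - d) (ri - d))).prod


/-!
Induction on `n` through the `q`-Pascal rule gives `((q - 1) x)^n Δ_q^n f(x) =
∑_j (-1)^(n-j) q^(binom(n-j,2) - binom(n,2)) [n choose j]_q f(q^j x)`.
At `x = q^j` each factor of `𝒫` is `q^j (q^j; q⁻¹)_s / (q; q)_s`, and this ratio is
`[j choose s]_q` for `s ≤ j` and `0` otherwise. Substituting `j = m - d`, the vanishing factors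
cut the sum off at `d = min_i r_i`, the symmetry `[m-d choose m-r_i]_q = [m-d choose r_i-d]_q`
produces the factors of `M`, and the powers of `q` collect into the prefactor.
-/

open Finset

section QNumbers

variable {q : ℝ}

lemma qInt_pos (hq : 0 < q) (n : ℕ) : 0 < qInt q (n + 1) :=
  sum_pos (fun i _ => pow_pos hq i) nonempty_range_add_one

lemma qFact_pos (hq : 0 < q) (n : ℕ) : 0 < qFact q n :=
  prod_pos fun i _ => qInt_pos hq i

lemma qFact_zero (q : ℝ) : qFact q 0 = 1 :=
  prod_range_zero _

lemma qFact_succ (q : ℝ) (n : ℕ) : qFact q (n + 1) = qFact q n * qInt q (n + 1) :=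
  prod_range_succ _ _

lemma qInt_add (q : ℝ) (a b : ℕ) : qInt q (a + b) = qInt q a + q ^ a * qInt q b := by
  simp only [qInt, sum_range_add, mul_sum, pow_add]

lemma qBinom_zero_right (hq : 0 < q) (n : ℕ) : qBinom q n 0 = 1 := by
  rw [qBinom, Nat.sub_zero, qFact_zero, one_mul, div_self (qFact_pos hq n).ne']

lemma qBinom_self (hq : 0 < q) (n : ℕ) : qBinom q n n = 1 := by
  rw [qBinom, Nat.sub_self, qFact_zero, mul_one, div_self (qFact_pos hq n).ne']

lemma qBinom_symm (q : ℝ) {n d : ℕ} (h : d ≤ n) : qBinom q n (n - d) = qBinom q n d := by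
  rw [qBinom, qBinom, Nat.sub_sub_self h, mul_comm]

lemma qBinom_succ_succ (hq : 0 < q) {n j : ℕ} (h : j < n) :
    qBinom q (n + 1) (j + 1) = qBinom q n j + q ^ (j + 1) * qBinom q n (j + 1) := by
  obtain ⟨t, rfl⟩ : ∃ t, n = j + 1 + t := ⟨n - (j + 1), by omega⟩
  have hsplit : qInt q (j + 1 + t + 1) = qInt q (j + 1) + q ^ (j + 1) * qInt q (t + 1) := by
    rw [← qInt_add, add_assoc]
  simp only [qBinom, show j + 1 + t + 1 - (j + 1) = t + 1 by omega,
    show j + 1 + t - j = t + 1 by omega, show j + 1 + t - (j + 1) = t by omega,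
    qFact_succ _ (j + 1 + t), qFact_succ _ j, qFact_succ _ t, hsplit]
  have := (qFact_pos hq (j + 1 + t)).ne'
  have := (qFact_pos hq j).ne'
  have := (qFact_pos hq t).ne'
  have := (qInt_pos hq j).ne'
  have := (qInt_pos hq t).ne'
  field_simp

end QNumbers

section QPochhammer

variable {q : ℝ}

lemma qPoch_self (q : ℝ) (s : ℕ) : qPoch q q s = (1 - q) ^ s * qFact q s := by
  rw [qPoch, qFact, pow_eq_prod_const, ← prod_mul_distrib]
  refine prod_congr rfl fun i _ => ?_
  rw [qInt, mul_neg_geom_sum, pow_succ']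

lemma qPoch_pow_inv_eq_zero (hq : q ≠ 0) {j s : ℕ} (h : j < s) : qPoch (q ^ j) q⁻¹ s = 0 :=
  prod_eq_zero (mem_range.mpr h) (by rw [inv_pow, mul_inv_cancel₀ (pow_ne_zero _ hq), sub_self])

lemma qPoch_pow_inv_mul_qPoch (hq : q ≠ 0) (a s : ℕ) :
    qPoch (q ^ (a + s)) q⁻¹ s * qPoch q q a = qPoch q q (a + s) := by
  rw [qPoch, qPoch, qPoch, prod_range_add, mul_comm,
    ← prod_range_reflect (fun i => 1 - q * q ^ (a + i)) s]
  congr 1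
  refine prod_congr rfl fun i hi => ?_
  have hi : i < s := mem_range.mp hi
  rw [show a + s = a + (s - 1 - i) + 1 + i by omega, pow_add, inv_pow, mul_assoc,
    mul_inv_cancel₀ (pow_ne_zero _ hq), mul_one, pow_succ']

lemma qPoch_pow_inv_div_qPoch (hq : 0 < q) (hq1 : q ≠ 1) (j s : ℕ) :
    qPoch (q ^ j) q⁻¹ s / qPoch q q s = if s ≤ j then qBinom q j s else 0 := by
  split_ifs with h
  · obtain ⟨a, rfl⟩ : ∃ a, j = a + s := ⟨j - s, by omega⟩
    have hsub : (1 - q) ≠ 0 := sub_ne_zero.mpr hq1.symm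
    have := (qFact_pos hq a).ne'
    have := (qFact_pos hq s).ne'
    rw [← mul_div_mul_right _ _ ((qPoch_self q a).trans_ne (by positivity)),
      qPoch_pow_inv_mul_qPoch hq.ne', qPoch_self, qPoch_self, qPoch_self, qBinom,
      Nat.add_sub_cancel, pow_add]
    field_simp
  · rw [qPoch_pow_inv_eq_zero hq.ne' (not_le.mp h), zero_div]

end QPochhammer

lemma cast_choose_two_succ (n : ℕ) : ((n + 1).choose 2 : ℤ) = n.choose 2 + n := by
  rw [Nat.choose_succ_succ', Nat.choose_one_right]
  push_cast
  ring

lemma cast_mul_succ_div_two (d : ℕ) : ((d : ℤ) * (d + 1) / 2) = ((d + 1).choose 2 : ℕ) := by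
  rw [Nat.choose_two_right, Nat.add_sub_cancel, Int.natCast_div]
  push_cast
  ring_nf

section IteratedQDifference

variable {q : ℝ}

/-- `qDiffCoeff q n j` is the coefficient of `f (q ^ j * x)` in `((q - 1) x) ^ n Δ_q^n f (x)`. -/
noncomputable def qDiffCoeff (q : ℝ) : ℕ → ℤ → ℝ
  | 0, j => if j = 0 then 1 else 0
  | n + 1, j => q ^ (-(n : ℤ)) * qDiffCoeff q n (j - 1) - qDiffCoeff q n j

lemma qDiffCoeff_of_neg (q : ℝ) (n : ℕ) {j : ℤ} (hj : j < 0) : qDiffCoeff q n j = 0 := by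
  induction n generalizing j with
  | zero => simp [qDiffCoeff, hj.ne]
  | succ n ih => rw [qDiffCoeff, ih (by omega), ih hj, mul_zero, sub_zero]

lemma qDiffCoeff_of_lt (q : ℝ) (n : ℕ) {j : ℤ} (hj : n < j) : qDiffCoeff q n j = 0 := by
  induction n generalizing j with
  | zero => simp only [qDiffCoeff, ite_eq_right_iff]; omega
  | succ n ih => rw [qDiffCoeff, ih (by omega), ih (by omega), mul_zero, sub_zero]

lemma sum_qDiffCoeff_succ (q : ℝ) (n : ℕ) (g : ℕ → ℝ) :
    ∑ j ∈ range (n + 2), qDiffCoeff q (n + 1) j * g j =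
      q ^ (-(n : ℤ)) * ∑ j ∈ range (n + 1), qDiffCoeff q n j * g (j + 1) -
        ∑ j ∈ range (n + 1), qDiffCoeff q n j * g j := by
  simp only [qDiffCoeff, sub_mul, sum_sub_distrib, mul_assoc, ← mul_sum]
  rw [sum_range_succ', sum_range_succ _ (n + 1), qDiffCoeff_of_neg q n (by norm_num),
    qDiffCoeff_of_lt q n (by push_cast; omega)]
  simp

lemma iterate_qDiffOp_eq_sum (hq : q ≠ 0) (hq1 : q ≠ 1) (f : ℝ → ℝ) (n : ℕ) {x : ℝ}
    (hx : x ≠ 0) :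
    (qDiffOp q)^[n] f x =
      ((q - 1) * x) ^ (-(n : ℤ)) * ∑ j ∈ range (n + 1), qDiffCoeff q n j * f (q ^ j * x) := by
  induction n generalizing x with
  | zero => simp [qDiffCoeff]
  | succ n ih =>
    have hqx : (q - 1) * x ≠ 0 := mul_ne_zero (sub_ne_zero.mpr hq1) hx
    have hshift (j : ℕ) : q ^ j * (q * x) = q ^ (j + 1) * x := by ring
    rw [Function.iterate_succ_apply', qDiffOp, ih (mul_ne_zero hq hx), ih hx,
      sum_qDiffCoeff_succ q n (fun j => f (q ^ j * x))]
    simp only [hshift]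
    rw [show (q - 1) * (q * x) = q * ((q - 1) * x) by ring, mul_zpow, Nat.cast_succ, neg_add,
      zpow_add₀ hqx, zpow_neg_one]
    field_simp

lemma qDiffCoeff_eq (hq : 0 < q) {n j : ℕ} (h : j ≤ n) :
    qDiffCoeff q n j =
      (-1) ^ (n - j) * q ^ (((n - j).choose 2 : ℤ) - n.choose 2) * qBinom q n j := by
  induction n generalizing j with
  | zero =>
    obtain rfl : j = 0 := by omega
    simp [qDiffCoeff, qBinom_zero_right hq]
  | succ n ih =>
    rw [qDiffCoeff]
    rcases j with _ | i
    · rw [qDiffCoeff_of_neg q n (by norm_num), ih (Nat.zero_le n), qBinom_zero_right hq,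
        qBinom_zero_right hq]
      simp [pow_succ]
    rw [show ((i + 1 : ℕ) : ℤ) - 1 = i by omega]
    rcases (Nat.lt_succ_iff.mp h).lt_or_eq with hi | rfl
    · obtain ⟨t, rfl⟩ : ∃ t, n = i + 1 + t := ⟨n - (i + 1), by omega⟩
      rw [ih (j := i) (by omega), ih (j := i + 1) (by omega), qBinom_succ_succ hq hi,
        show i + 1 + t + 1 - (i + 1) = t + 1 by omega, show i + 1 + t - i = t + 1 by omega,
        show i + 1 + t - (i + 1) = t by omega]
      have hexp₁ : q ^ (-((i + 1 + t : ℕ) : ℤ)) *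
          q ^ (((t + 1).choose 2 : ℤ) - (i + 1 + t).choose 2)
          = q ^ (((t + 1).choose 2 : ℤ) - (i + 1 + t + 1).choose 2) := by
        rw [← zpow_add₀ hq.ne', cast_choose_two_succ (i + 1 + t)]
        ring_nf
      have hexp₂ : q ^ (((t + 1).choose 2 : ℤ) - (i + 1 + t + 1).choose 2) * q ^ (i + 1)
          = q ^ ((t.choose 2 : ℤ) - (i + 1 + t).choose 2) := by
        rw [← zpow_natCast, ← zpow_add₀ hq.ne', cast_choose_two_succ (i + 1 + t),
          cast_choose_two_succ t]
        push_cast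
        ring_nf
      linear_combination (-1 : ℝ) ^ (t + 1) * qBinom q (i + 1 + t) i * hexp₁ -
        (-1 : ℝ) ^ (t + 1) * qBinom q (i + 1 + t) (i + 1) * hexp₂
    · rw [qDiffCoeff_of_lt q i (j := ((i + 1 : ℕ) : ℤ)) (by omega), ih (j := i) le_rfl,
        qBinom_self hq, qBinom_self hq, cast_choose_two_succ]
      simp only [Nat.sub_self, pow_zero, Nat.choose_zero_succ, Nat.cast_zero, zero_sub, one_mul,
        mul_one, sub_zero, ← zpow_add₀ hq.ne']
      ring_nf

end IteratedQDifference

lemma le_foldr_min_iff {α : Type*} [LinearOrder α] {a d : α} {l : List α} :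
    d ≤ l.foldr min a ↔ d ≤ a ∧ ∀ b ∈ l, d ≤ b := by
  induction l with
  | nil => simp
  | cons b l ih => simp only [List.foldr_cons, le_min_iff, ih, List.forall_mem_cons]; tauto

lemma MqL_ofFn {m k : ℕ} (q : ℝ) (r : Fin (k + 1) → ℕ) (hr : ∀ i, r i ≤ m) :
    MqL q m (List.ofFn r) = ∑ d ∈ range (m + 1),
      if ∀ i, d ≤ r i then
        (-1) ^ d * q ^ ((d * (d + 1) / 2 : ℤ) - (k + 1 : ℕ) * d) * qBinom q m d *
          ∏ i, qBinom q (m - d) (r i - d)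
      else 0 := by
  have hrange : range ((List.ofFn fun i : Fin k => r i.succ).foldr min (r 0) + 1) =
      (range (m + 1)).filter fun d => ∀ i, d ≤ r i := by
    ext d
    simp only [mem_range, mem_filter, Nat.lt_succ_iff, le_foldr_min_iff, List.mem_ofFn,
      forall_exists_index, forall_apply_eq_imp_iff, Fin.forall_fin_succ]
    exact ⟨fun h => ⟨h.1.trans (hr 0), h⟩, And.right⟩
  rw [← sum_filter, List.ofFn_succ, MqL, hrange, ← List.ofFn_succ]
  simp [List.map_ofFn, List.prod_ofFn, Fin.prod_univ_succ]

section Evaluation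

variable {q : ℝ}

lemma prod_mul_qPoch_div_eval_pow (hq : 0 < q) (hq1 : q ≠ 1) {k : ℕ} (s : Fin (k + 1) → ℕ)
    (j : ℕ) :
    (∏ i, (q ^ j * qPoch (q ^ j) q⁻¹ (s i) / qPoch q q (s i))) / q ^ j =
      q ^ (j * k) * ∏ i, if s i ≤ j then qBinom q j (s i) else 0 := by
  simp only [mul_div_assoc, prod_mul_distrib, prod_const, card_univ, Fintype.card_fin,
    qPoch_pow_inv_div_qPoch hq hq1]
  rw [← pow_mul, mul_add_one, pow_add]
  field_simp

lemma prod_qBinom_ite_eq {m d : ℕ} (q : ℝ) {k : ℕ} (r : Fin k → ℕ) (hr : ∀ i, r i ≤ m)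
    (hd : d ≤ m) :
    (∏ i, if m - r i ≤ m - d then qBinom q (m - d) (m - r i) else 0) =
      if ∀ i, d ≤ r i then ∏ i, qBinom q (m - d) (r i - d) else 0 := by
  have hiff : (∀ i, m - r i ≤ m - d) ↔ ∀ i, d ≤ r i :=
    forall_congr' fun i => by have := hr i; omega
  rw [Fintype.prod_ite_zero]
  simp only [hiff]
  split_ifs with h
  · refine prod_congr rfl fun i _ => ?_
    rw [← qBinom_symm q (show r i - d ≤ m - d by have := hr i; omega)]
    congr 1
    have := h i
    omega
  · rfl

end Evaluation

/-- The `m`-th iterated `q`-difference at `x = 1` of the polynomial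
`𝒫(x) = x⁻¹ ∏_{i=1}^k (x (x; q⁻¹)_{m−r_i} / (q; q)_{m−r_i})` equals
`q^{−binom(m,2) + m(k−1)} (q−1)^{−m} M^m_{r_1,…,r_k}(q)`. -/
theorem iterated_q_difference_of_P
    (q : ℝ) (hq : 1 < q) (m k : ℕ) (hk : 1 ≤ k) (r : Fin k → ℕ) (hr : ∀ i, r i ≤ m) :
    (qDiffOp q)^[m]
        (fun x => (∏ i, (x * qPoch x q⁻¹ (m - r i) / qPoch q q (m - r i))) / x) 1
    = q ^ (((m * (k - 1) : ℕ) : ℤ) - ((m * (m - 1) / 2 : ℕ) : ℤ)) *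
        (q - 1) ^ (-(m : ℤ)) * MqL q m (List.ofFn r) := by
  have hq0 : 0 < q := by linarith
  obtain ⟨k, rfl⟩ : ∃ k', k = k' + 1 := ⟨k - 1, by omega⟩
  rw [iterate_qDiffOp_eq_sum hq0.ne' hq.ne' _ m one_ne_zero, MqL_ofFn q r hr,
    Nat.add_sub_cancel, ← Nat.choose_two_right]
  simp only [mul_one]
  rw [mul_comm (q ^ _), mul_assoc]
  congr 1
  rw [mul_sum, ← sum_range_reflect]
  refine sum_congr rfl fun d hd => ?_
  have hd : d ≤ m := Nat.lt_succ_iff.mp (mem_range.mp hd)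
  rw [show m + 1 - 1 - d = m - d by omega, prod_mul_qPoch_div_eval_pow hq0 hq.ne',
    prod_qBinom_ite_eq q r hr hd, qDiffCoeff_eq hq0 (Nat.sub_le m d), Nat.sub_sub_self hd,
    qBinom_symm q hd]
  have hexp : q ^ ((d.choose 2 : ℤ) - m.choose 2) * q ^ ((m - d) * k) =
      q ^ (((m * k : ℕ) : ℤ) - (m.choose 2 : ℕ)) *
        q ^ ((d * (d + 1) / 2 : ℤ) - ((k + 1 : ℕ) : ℤ) * d) := by
    rw [← zpow_natCast, ← zpow_add₀ hq0.ne', ← zpow_add₀ hq0.ne', cast_mul_succ_div_two,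
      cast_choose_two_succ]
    push_cast [Nat.cast_sub hd]
    ring_nf
  split_ifs
  · linear_combination (-1) ^ d * qBinom q m d * (∏ i, qBinom q (m - d) (r i - d)) * hexp
  · simp
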